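/- Let K = 𝔽_q((t)) with q = p^f. The quotient group K/℘(K) of the additive group of K by the image of the Artin-Schreier map ℘(x) = x^p - x is a countably infinite group. -/

import Mathlib

/-- The Artin–Schreier map `℘(x) = x^p - x` as an additive group homomorphism on a
commutative ring of characteristic `p`. -/
def artinSchreierHom (K : Type*) [CommRing K] (p : ℕ) [Fact p.Prime] [CharP K p] :
    K →+ K where
  toFun x := x ^ p - x
  map_zero' := by simp [zero_pow (Fact.out (p := p.Prime)).ne_zero]
  map_add' x y := by rw [add_pow_char x y p]; ring

/-- The maximal ideal `𝔭 = t·𝔽_q[[t]]` of the valuation ring `𝔽_q[[t]]`, viewed as a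
subset of the local function field `K = 𝔽_q((t))` (formal Laurent series). -/
def laurentMaximalIdeal (F : Type*) [Field F] : Set (LaurentSeries F) :=
  {x | ∃ y : PowerSeries F, PowerSeries.constantCoeff (R := F) y = 0 ∧
        HahnSeries.ofPowerSeries ℤ F y = x}

instance (p f : ℕ) [Fact p.Prime] [NeZero f] :
    CharP (LaurentSeries (GaloisField p f)) p :=
  charP_of_injective_ringHom
    (f := (HahnSeries.C : GaloisField p f →+* LaurentSeries (GaloisField p f)))
    HahnSeries.C_injective p

/-!
By Hensel's lemma in the `X`-adically complete ring `𝔽_q[[t]]`, the polynomial `X^p - X - y` has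
a root for every `y ∈ 𝔭`, since `0` is a simple root modulo `𝔭`; thus `𝔭 ⊆ ℘(K)`. Hence every
class of `K/℘(K)` contains the truncation of a representative to its (finitely many) terms of
degree `≤ 0`, so the quotient is countable. Conversely `ord(u^p - u) = p·ord u` when `ord u < 0`,
and `ord(u^p - u) ≥ 0` otherwise, so an element of `℘(K)` of negative order has order divisible by
`p`; therefore the classes of `t^(-(pn+1))`, `n ∈ ℕ`, are pairwise distinct.
-/

open HahnSeries

theorem PowerSeries.exists_pow_sub_self_eq {R : Type*} [CommRing R] {n : ℕ} (hn : 2 ≤ n)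
    {y : PowerSeries R} (hy : constantCoeff y = 0) : ∃ x, x ^ n - x = y := by
  have hmonic : (Polynomial.X ^ n - (Polynomial.X + Polynomial.C y)).Monic :=
    Polynomial.monic_X_pow_sub (by compute_degree!)
  obtain ⟨x, hroot, -⟩ := HenselianRing.is_henselian (I := Ideal.span {X})
    _ hmonic 0 (by simpa [zero_pow (by omega : n ≠ 0), Ideal.mem_span_singleton,
      X_dvd_iff] using hy)
    (by simp [Polynomial.derivative_X_pow, zero_pow (by omega : n - 1 ≠ 0)])
  exact ⟨x, by simpa [sub_eq_zero, ← sub_sub] using hroot⟩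

theorem HahnSeries.support_truncLT_subset_Ico {Γ R : Type*} [LinearOrder Γ] [Zero Γ] [Zero R]
    (c : Γ) (x : HahnSeries Γ R) : (truncLT c x).support ⊆ Set.Ico x.order c := by
  intro i hi
  rw [support_truncLT] at hi
  exact ⟨order_le_of_coeff_ne_zero hi.1, hi.2⟩

theorem HahnSeries.order_single_sub_single {Γ R : Type*} [LinearOrder Γ] [Zero Γ] [AddGroup R]
    {a b : Γ} (hab : a < b) {r : R} (hr : r ≠ 0) (s : R) :
    (single a r - single b s).order = a := by
  have htop : (single a r - single b s).orderTop = a :=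
    (orderTop_sub ((orderTop_single hr).trans_lt (lt_orderTop_single hab))).trans
      (orderTop_single hr)
  rw [← WithTop.coe_inj, order_eq_orderTop_of_ne_zero (orderTop_ne_top.mp (by simp [htop])), htop]

namespace LaurentSeries

section Domain

variable {R : Type*} [CommRing R] [IsDomain R]

theorem order_pow_sub_self_of_order_neg {n : ℕ} (hn : 2 ≤ n) {u : LaurentSeries R}
    (hu : u.order < 0) : (u ^ n - u).order = n * u.order := by
  have hu0 : u ≠ 0 := by rintro rfl; simp at hu
  have hlt : (u ^ n).orderTop < u.orderTop := by
    rw [← order_eq_orderTop_of_ne_zero (pow_ne_zero n hu0), ← order_eq_orderTop_of_ne_zero hu0,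
      WithTop.coe_lt_coe, order_pow, nsmul_eq_mul]
    nlinarith
  have htop := orderTop_sub hlt
  rw [← WithTop.coe_inj, order_eq_orderTop_of_ne_zero (orderTop_ne_top.mp (htop ▸ hlt.ne_top)),
    htop, ← order_eq_orderTop_of_ne_zero (pow_ne_zero n hu0), order_pow, nsmul_eq_mul]

theorem order_pow_sub_self_nonneg (n : ℕ) {u : LaurentSeries R} (hu : 0 ≤ u.order) :
    0 ≤ (u ^ n - u).order := by
  rw [← zero_le_orderTop_iff] at hu ⊢
  refine le_trans (le_min ?_ hu) min_orderTop_le_orderTop_sub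
  rw [zero_le_orderTop_iff, order_pow, nsmul_eq_mul]
  exact mul_nonneg (Nat.cast_nonneg n) (zero_le_orderTop_iff.mp hu)

end Domain

section Field

variable {F : Type*} [Field F]

theorem mem_laurentMaximalIdeal_of_coeff_eq_zero {x : LaurentSeries F}
    (hx : ∀ n ≤ 0, x.coeff n = 0) : x ∈ laurentMaximalIdeal F := by
  refine ⟨PowerSeries.mk fun n => x.coeff n, by simpa using hx 0 le_rfl, ?_⟩
  ext n
  rw [PowerSeries.coeff_coe, PowerSeries.coeff_mk]
  split_ifs with hn
  · exact (hx n hn.le).symm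
  · rw [Int.natCast_natAbs, abs_of_nonneg (not_lt.mp hn)]

theorem sub_truncLT_one_mem_laurentMaximalIdeal (x : LaurentSeries F) :
    x - truncLT 1 x ∈ laurentMaximalIdeal F :=
  mem_laurentMaximalIdeal_of_coeff_eq_zero fun n hn => by
    rw [coeff_sub, coeff_truncLT_of_lt (by omega), sub_self]

variable {p : ℕ} [hp : Fact p.Prime] [CharP (LaurentSeries F) p]

theorem laurentMaximalIdeal_subset_range_artinSchreierHom :
    laurentMaximalIdeal F ⊆ (artinSchreierHom (LaurentSeries F) p).range := by
  rintro _ ⟨y, hy, rfl⟩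
  obtain ⟨x, rfl⟩ := PowerSeries.exists_pow_sub_self_eq hp.out.two_le hy
  exact ⟨ofPowerSeries ℤ F x, by simp [artinSchreierHom]⟩

theorem dvd_order_of_mem_range_artinSchreierHom {y : LaurentSeries F}
    (hy : y ∈ (artinSchreierHom (LaurentSeries F) p).range) (hneg : y.order < 0) :
    (p : ℤ) ∣ y.order := by
  obtain ⟨u, rfl⟩ := hy
  rcases lt_or_ge u.order 0 with hu | hu
  · exact ⟨u.order, order_pow_sub_self_of_order_neg hp.out.two_le hu⟩
  · exact absurd (order_pow_sub_self_nonneg p hu) hneg.not_ge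

theorem countable_quotient_range_artinSchreierHom [Countable F] :
    Countable (LaurentSeries F ⧸ (artinSchreierHom (LaurentSeries F) p).range) := by
  refine Function.Surjective.countable
    (f := fun d : ℤ →₀ F => (QuotientAddGroup.mk (ofFinsupp d) : _ ⧸ _)) ?_
  rintro ⟨x⟩
  refine ⟨.ofSupportFinite (truncLT 1 x).coeff
    ((Set.finite_Ico _ _).subset (support_truncLT_subset_Ico 1 x)), ?_⟩
  refine QuotientAddGroup.eq.mpr ?_
  rw [neg_add_eq_sub]
  exact laurentMaximalIdeal_subset_range_artinSchreierHom
    (sub_truncLT_one_mem_laurentMaximalIdeal x)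

theorem infinite_quotient_range_artinSchreierHom :
    Infinite (LaurentSeries F ⧸ (artinSchreierHom (LaurentSeries F) p).range) := by
  set e : ℕ → LaurentSeries F := fun n => single (-((p : ℤ) * n + 1)) 1
  refine Infinite.of_injective (fun n => (QuotientAddGroup.mk (e n) : _ ⧸ _)) ?_
  intro m n hmn
  by_contra hne
  wlog hlt : m < n generalizing m n
  · exact this hmn.symm (Ne.symm hne) (lt_of_le_of_ne (not_lt.mp hlt) (Ne.symm hne))
  have hord : (e n - e m).order = -((p : ℤ) * n + 1) :=
    order_single_sub_single (by gcongr; exact_mod_cast hp.out.pos) one_ne_zero 1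
  have hdvd := dvd_order_of_mem_range_artinSchreierHom
    (neg_add_eq_sub (e m) (e n) ▸ QuotientAddGroup.eq.mp hmn)
    (hord ▸ neg_neg_of_pos (by positivity))
  rw [hord, dvd_neg, dvd_add_right (dvd_mul_right _ _)] at hdvd
  exact hp.out.one_lt.ne' (by exact_mod_cast Int.eq_one_of_dvd_one (by positivity) hdvd)

end Field

end LaurentSeries

/-- For `K = 𝔽_q((t))` with `q = p^f`, the quotient `K/℘(K)` of the additive group of
`K` by the image of the Artin–Schreier map `℘(x) = x^p - x` is countably infinite. -/
theorem artin_schreier_quotient_countably_infinite (p f : ℕ) [Fact p.Prime] [NeZero f] :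
    Countable (LaurentSeries (GaloisField p f) ⧸
        (artinSchreierHom (LaurentSeries (GaloisField p f)) p).range) ∧
      Infinite (LaurentSeries (GaloisField p f) ⧸
        (artinSchreierHom (LaurentSeries (GaloisField p f)) p).range) :=
  ⟨LaurentSeries.countable_quotient_range_artinSchreierHom,
    LaurentSeries.infinite_quotient_range_artinSchreierHom⟩
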